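/- arXiv:2312.16657 — 4 statements merged into one kernel-verified Lean document; each statement's English description precedes it below -/
import Mathlib

section
/- For every natural number n ≥ 1 and real x with x ≠ 1, x ≠ −1, and 1 + 2x·cos(2πl/n) + x² ≠ 0 for all l, one has: if n is odd then ∑_{l=0}^{n-1} 1/(1 + 2x·cos(2πl/n) + x²) = n(xⁿ − 1)/((x² − 1)(xⁿ + 1)), and if n is even then the sum equals n(xⁿ + 1)/((x² − 1)(xⁿ − 1)). -/
/-!
With `ω = exp (2πi/n)` one has `1 - 2y cos (2πl/n) + y² = (y - ωˡ)(y - ω⁻ˡ)`, and partial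
fractions turn the sum into two copies of `∑ₗ 1/(y - ωˡ)`, the logarithmic derivative
`n yⁿ⁻¹/(yⁿ - 1)` of `yⁿ - 1 = ∏ₗ (y - ωˡ)`. Substituting `y = -x` gives both parity cases.
-/

open Real Finset

section Field

variable {K : Type*} [Field K]

theorem one_div_sub_eq_geom_sum₂_div {z w : K} {n : ℕ} (hw : w ^ n = 1) (hz : z ^ n ≠ 1) :
    1 / (z - w) = (∑ j ∈ range n, w ^ j * z ^ (n - 1 - j)) / (z ^ n - 1) := by
  have hwz : w ≠ z := by rintro rfl; exact hz hw
  rw [(Commute.all w z).geom_sum₂ hwz n, hw]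
  have h1 : z - w ≠ 0 := sub_ne_zero.mpr hwz.symm
  have h2 : w - z ≠ 0 := sub_ne_zero.mpr hwz
  have h3 : z ^ n - 1 ≠ 0 := sub_ne_zero.mpr hz
  field_simp
  ring

theorem one_div_sub_mul_sub_eq_of_mul_eq_one {z a b : K} (hab : a * b = 1) (ha : z - a ≠ 0)
    (hb : z - b ≠ 0) (hz : z ^ 2 ≠ 1) :
    1 / ((z - a) * (z - b)) = (z * (1 / (z - a) + 1 / (z - b)) - 1) / (z ^ 2 - 1) := by
  have hz' : z ^ 2 - 1 ≠ 0 := sub_ne_zero.mpr hz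
  field_simp
  linear_combination hab

namespace IsPrimitiveRoot

variable {ζ z : K} {n : ℕ}

theorem sum_range_pow_pow_eq_ite (hζ : IsPrimitiveRoot ζ n) {j : ℕ} (hj : j < n) :
    ∑ l ∈ range n, (ζ ^ j) ^ l = if j = 0 then (n : K) else 0 := by
  split_ifs with hj0
  · simp [hj0]
  · rw [geom_sum_eq (hζ.pow_ne_one_of_pos_of_lt hj0 hj), ← pow_mul, mul_comm, pow_mul,
      hζ.pow_eq_one, one_pow, sub_self, zero_div]

theorem sub_pow_ne_zero (hζ : IsPrimitiveRoot ζ n) (hz : z ^ n ≠ 1) (l : ℕ) : z - ζ ^ l ≠ 0 :=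
  fun h => hz (by rw [sub_eq_zero.mp h, pow_right_comm, hζ.pow_eq_one, one_pow])

theorem sum_one_div_sub_pow (hζ : IsPrimitiveRoot ζ n) (hz : z ^ n ≠ 1) :
    ∑ l ∈ range n, 1 / (z - ζ ^ l) = n * z ^ (n - 1) / (z ^ n - 1) := by
  have hn : 0 < n := Nat.pos_of_ne_zero (by rintro rfl; exact hz (pow_zero z))
  calc ∑ l ∈ range n, 1 / (z - ζ ^ l)
      = ∑ l ∈ range n, (∑ j ∈ range n, (ζ ^ j) ^ l * z ^ (n - 1 - j)) / (z ^ n - 1) := by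
        refine sum_congr rfl fun l _ => ?_
        have hζl : (ζ ^ l) ^ n = 1 := by rw [pow_right_comm, hζ.pow_eq_one, one_pow]
        rw [one_div_sub_eq_geom_sum₂_div hζl hz]
        simp only [pow_right_comm ζ l]
    _ = (∑ j ∈ range n, (∑ l ∈ range n, (ζ ^ j) ^ l) * z ^ (n - 1 - j)) / (z ^ n - 1) := by
        rw [← sum_div, sum_comm]
        simp only [sum_mul]
    _ = (∑ j ∈ range n, if j = 0 then n * z ^ (n - 1 - j) else 0) / (z ^ n - 1) := by
        congr 1
        refine sum_congr rfl fun j hj => ?_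
        rw [hζ.sum_range_pow_pow_eq_ite (mem_range.mp hj), ite_mul, zero_mul]
    _ = n * z ^ (n - 1) / (z ^ n - 1) := by
        rw [sum_ite_eq' _ _, if_pos (mem_range.mpr hn), Nat.sub_zero]

theorem sum_one_div_sub_pow_mul_sub_inv_pow (hζ : IsPrimitiveRoot ζ n) (hz : z ^ n ≠ 1)
    (hz2 : z ^ 2 ≠ 1) :
    ∑ l ∈ range n, 1 / ((z - ζ ^ l) * (z - ζ⁻¹ ^ l)) =
      n * (z ^ n + 1) / ((z ^ 2 - 1) * (z ^ n - 1)) := by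
  have hn : n ≠ 0 := by rintro rfl; exact hz (pow_zero z)
  have hζ0 : ζ ≠ 0 := hζ.ne_zero hn
  calc ∑ l ∈ range n, 1 / ((z - ζ ^ l) * (z - ζ⁻¹ ^ l))
      = ∑ l ∈ range n, (z * (1 / (z - ζ ^ l) + 1 / (z - ζ⁻¹ ^ l)) - 1) / (z ^ 2 - 1) := by
        refine sum_congr rfl fun l _ => one_div_sub_mul_sub_eq_of_mul_eq_one ?_
          (hζ.sub_pow_ne_zero hz l) (hζ.inv.sub_pow_ne_zero hz l) hz2
        rw [inv_pow, mul_inv_cancel₀ (pow_ne_zero l hζ0)]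
    _ = (z * (∑ l ∈ range n, 1 / (z - ζ ^ l) + ∑ l ∈ range n, 1 / (z - ζ⁻¹ ^ l)) - n) /
          (z ^ 2 - 1) := by
        rw [← sum_div, sum_sub_distrib, ← mul_sum, sum_add_distrib, sum_const, card_range,
          nsmul_one]
    _ = n * (z ^ n + 1) / ((z ^ 2 - 1) * (z ^ n - 1)) := by
        have hzn : z * z ^ (n - 1) = z ^ n := by rw [← pow_succ', Nat.sub_add_cancel (by omega)]
        have h1 : z ^ 2 - 1 ≠ 0 := sub_ne_zero.mpr hz2
        have h2 : z ^ n - 1 ≠ 0 := sub_ne_zero.mpr hz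
        rw [hζ.sum_one_div_sub_pow hz, hζ.inv.sum_one_div_sub_pow hz]
        field_simp
        linear_combination (2 * (n : K)) * hzn

end IsPrimitiveRoot

end Field

theorem Complex.ofReal_one_sub_two_mul_mul_cos_add_sq (y θ : ℝ) :
    ((1 - 2 * y * Real.cos θ + y ^ 2 : ℝ) : ℂ) =
      (y - Complex.exp (θ * Complex.I)) * (y - Complex.exp (-θ * Complex.I)) := by
  have hcos := Complex.two_cos θ
  have hexp : Complex.exp (θ * Complex.I) * Complex.exp (-θ * Complex.I) = 1 := by
    rw [← Complex.exp_add, neg_mul, add_neg_cancel, Complex.exp_zero]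
  push_cast
  linear_combination (-(y : ℂ)) * hcos - hexp

theorem Complex.exp_two_pi_mul_I_div_pow (n l : ℕ) :
    Complex.exp (2 * π * Complex.I / n) ^ l = Complex.exp ((2 * π * l / n : ℝ) * Complex.I) := by
  rw [← Complex.exp_nat_mul]
  push_cast
  ring_nf

theorem sum_one_div_one_sub_two_mul_cos_add_sq {n : ℕ} (hn : n ≠ 0) {y : ℝ} (hy : y ^ 2 ≠ 1) :
    ∑ l ∈ range n, 1 / (1 - 2 * y * cos (2 * π * l / n) + y ^ 2) =
      n * (y ^ n + 1) / ((y ^ 2 - 1) * (y ^ n - 1)) := by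
  have hyn : y ^ n ≠ 1 := fun h => hy <| by
    rcases (pow_eq_one_iff_of_ne_zero hn).mp h with rfl | ⟨rfl, -⟩ <;> norm_num
  set ω := Complex.exp (2 * π * Complex.I / n)
  have hfac (l : ℕ) :
      ((1 - 2 * y * cos (2 * π * l / n) + y ^ 2 : ℝ) : ℂ) = (y - ω ^ l) * (y - ω⁻¹ ^ l) := by
    rw [Complex.ofReal_one_sub_two_mul_mul_cos_add_sq, inv_pow,
      Complex.exp_two_pi_mul_I_div_pow, ← Complex.exp_neg, neg_mul]
  apply Complex.ofReal_injective
  simp only [Complex.ofReal_sum, Complex.ofReal_div, Complex.ofReal_one, hfac]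
  rw [(Complex.isPrimitiveRoot_exp n hn).sum_one_div_sub_pow_mul_sub_inv_pow
    (by exact_mod_cast hyn) (by exact_mod_cast hy)]
  push_cast
  rfl

theorem rational_cos_sum_general (n : ℕ) (hn : 1 ≤ n) (x : ℝ) (hx1 : x ≠ 1) (hx2 : x ≠ -1) :
    (Odd n → ∑ l ∈ Finset.range n, 1 / (1 + 2 * x * Real.cos (2 * π * l / n) + x ^ 2) =
      n * (x ^ n - 1) / ((x ^ 2 - 1) * (x ^ n + 1))) ∧
    (Even n → ∑ l ∈ Finset.range n, 1 / (1 + 2 * x * Real.cos (2 * π * l / n) + x ^ 2) =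
      n * (x ^ n + 1) / ((x ^ 2 - 1) * (x ^ n - 1))) := by
  have hx : (-x) ^ 2 ≠ 1 := by rw [neg_sq, Ne, sq_eq_one_iff]; tauto
  have key := sum_one_div_one_sub_two_mul_cos_add_sq (Nat.one_le_iff_ne_zero.mp hn) hx
  simp only [neg_sq, mul_neg, neg_mul, sub_neg_eq_add] at key
  refine ⟨fun hodd => ?_, fun heven => ?_⟩
  · rw [key, hodd.neg_pow, show -x ^ n + 1 = -(x ^ n - 1) by ring,
      show -x ^ n - 1 = -(x ^ n + 1) by ring, mul_neg, mul_neg, neg_div_neg_eq]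
  · rw [key, heven.neg_pow]

theorem rational_cos_sum (n : ℕ) (hn : 1 ≤ n) (x : ℝ) (hx1 : x ≠ 1) (hx2 : x ≠ -1)
    (h : ∀ l < n, 1 + 2 * x * Real.cos (2 * π * l / n) + x ^ 2 ≠ 0) :
    (Odd n → ∑ l ∈ Finset.range n, 1 / (1 + 2 * x * Real.cos (2 * π * l / n) + x ^ 2) =
      n * (x ^ n - 1) / ((x ^ 2 - 1) * (x ^ n + 1))) ∧
    (Even n → ∑ l ∈ Finset.range n, 1 / (1 + 2 * x * Real.cos (2 * π * l / n) + x ^ 2) =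
      n * (x ^ n + 1) / ((x ^ 2 - 1) * (x ^ n - 1))) :=
  rational_cos_sum_general n hn x hx1 hx2
end

section
/- For every natural number n ≥ 1 and real x with |x| ≠ 1, ∑_{l=0}^{n-1} 1/(1 − 2x·cos(π(l + 1/2)/n) + x²) = n(x^{2n} − 1)/((x² − 1)(x^{2n} + 1)). -/
/-!
The points `ω_l = exp (iθ_l)`, `θ_l = π(l + 1/2)/n`, `l < 2n`, are the roots of `z ^ (2n) = -1`: they are
`α ζ ^ l` with `α ^ (2n) = -1` and `ζ` a primitive `2n`-th root of unity. Expanding each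
`1 / (1 - x ω_l)` as a finite geometric sum and using orthogonality of the powers of `ζ` gives
`∑_{l < 2n} 1 / (1 - x ω_l) = 2n / (1 + x ^ (2n))`. For real `x` the real part of a summand is
`1/2 + (1 - x²) / (2 (1 - 2x cos θ_l + x²))`, and `θ_{2n-1-l} = 2π - θ_l` halves the sum to `l < n`.
-/

open Real Finset

theorem Finset.sum_range_two_mul_eq_two_nsmul_of_symm {M : Type*} [AddCommMonoid M] {f : ℕ → M}
    {n : ℕ} (hf : ∀ i j, i + j + 1 = 2 * n → f i = f j) :
    ∑ l ∈ range (2 * n), f l = 2 • ∑ l ∈ range n, f l := by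
  rw [two_mul, sum_range_add, ← sum_range_reflect (fun l => f (n + l)), two_nsmul]
  congr 1
  exact sum_congr rfl fun l hl => hf _ _ (by have := mem_range.mp hl; omega)

namespace IsPrimitiveRoot

variable {K : Type*} [Field K] {ζ : K} {m : ℕ}

theorem geom_sum_pow_eq_zero (hζ : IsPrimitiveRoot ζ m) {j : ℕ} (hj : j ≠ 0) (hjm : j < m) :
    ∑ l ∈ range m, (ζ ^ j) ^ l = 0 := by
  rw [geom_sum_eq (hζ.pow_ne_one_of_pos_of_lt hj hjm), ← pow_mul, mul_comm, pow_mul,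
    hζ.pow_eq_one, one_pow, sub_self, zero_div]

theorem sum_one_div_one_sub_mul_pow (hζ : IsPrimitiveRoot ζ m) {y : K} (hy : y ^ m ≠ 1) :
    ∑ l ∈ range m, 1 / (1 - y * ζ ^ l) = m / (1 - y ^ m) := by
  have hym : 1 - y ^ m ≠ 0 := sub_ne_zero.mpr hy.symm
  have hterm (l : ℕ) :
      1 / (1 - y * ζ ^ l) = (∑ j ∈ range m, y ^ j * (ζ ^ j) ^ l) / (1 - y ^ m) := by
    have hgeom := mul_neg_geom_sum (y * ζ ^ l) m
    rw [mul_pow, ← pow_mul, mul_comm l, pow_mul, hζ.pow_eq_one, one_pow, mul_one] at hgeom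
    have hl : 1 - y * ζ ^ l ≠ 0 := fun h => hym (by rw [← hgeom, h, zero_mul])
    rw [div_eq_div_iff hl hym, one_mul, ← hgeom, mul_comm]
    congr 1
    exact sum_congr rfl fun j _ => by rw [mul_pow, ← pow_mul, ← pow_mul, mul_comm j l]
  rw [sum_congr rfl fun l _ => hterm l, ← sum_div, sum_comm]
  simp_rw [← mul_sum]
  rw [sum_eq_single 0
    (fun j hj hj0 => by rw [hζ.geom_sum_pow_eq_zero hj0 (mem_range.mp hj), mul_zero])
    (fun h => by simp_all)]
  simp

end IsPrimitiveRoot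

namespace Complex

theorem re_one_div_one_sub_mul_exp (x θ : ℝ) :
    (1 / (1 - x * exp (θ * I))).re =
      (1 - x * Real.cos θ) / (1 - 2 * x * Real.cos θ + x ^ 2) := by
  rw [one_div, inv_re, normSq_apply, exp_mul_I, ← ofReal_cos, ← ofReal_sin]
  simp only [sub_re, one_re, mul_re, ofReal_re, ofReal_im, add_re, add_im, I_re, I_im, sub_im,
    one_im, mul_im]
  congr 1
  · ring
  · linear_combination x ^ 2 * Real.sin_sq_add_cos_sq θ

theorem sum_range_one_div_one_sub_mul_exp {n : ℕ} (hn : n ≠ 0) {x : ℂ} (hx : x ^ (2 * n) ≠ -1) :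
    ∑ l ∈ range (2 * n), 1 / (1 - x * exp (↑(π * (l + 1 / 2) / n) * I)) =
      2 * n / (1 + x ^ (2 * n)) := by
  set α := exp (π * I / (2 * n))
  have hω (l : ℕ) : exp (↑(π * (l + 1 / 2) / n) * I) = α * exp (2 * π * I / ↑(2 * n)) ^ l := by
    rw [← exp_nat_mul, ← exp_add]
    congr 1
    push_cast
    field_simp
    ring
  have hα : α ^ (2 * n) = -1 := by
    rw [← exp_nat_mul, ← exp_pi_mul_I]
    congr 1
    push_cast
    field_simp
  simp_rw [hω, ← mul_assoc]
  rw [(isPrimitiveRoot_exp _ (by omega)).sum_one_div_one_sub_mul_pow, mul_pow, hα]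
  · push_cast
    ring
  · rw [mul_pow, hα]
    exact fun h => hx (by linear_combination -h)

end Complex

namespace Real

theorem sum_range_one_sub_mul_cos_div {n : ℕ} (hn : n ≠ 0) (x : ℝ) :
    ∑ l ∈ range (2 * n), (1 - x * cos (π * (l + 1 / 2) / n)) /
        (1 - 2 * x * cos (π * (l + 1 / 2) / n) + x ^ 2) =
      2 * n / (1 + x ^ (2 * n)) := by
  have hX : (x : ℂ) ^ (2 * n) ≠ -1 := by
    exact_mod_cast (ne_of_gt (by linarith [(even_two_mul n).pow_nonneg x]) : x ^ (2 * n) ≠ -1)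
  have h := congrArg Complex.re (Complex.sum_range_one_div_one_sub_mul_exp hn hX)
  simp only [Complex.re_sum, Complex.re_one_div_one_sub_mul_exp] at h
  rw [h]
  norm_cast

theorem cos_pi_mul_add_half_div_eq_of_add_add_one_eq {n i j : ℕ} (hij : i + j + 1 = 2 * n) :
    cos (π * (i + 1 / 2) / n) = cos (π * (j + 1 / 2) / n) := by
  have hn : (n : ℝ) ≠ 0 := by exact_mod_cast (by omega : n ≠ 0)
  have hi : (i : ℝ) = 2 * n - 1 - j := by
    rw [eq_sub_iff_add_eq, eq_sub_iff_add_eq]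
    exact_mod_cast hij
  rw [← cos_two_pi_sub]
  congr 1
  rw [hi]
  field_simp
  ring

theorem one_sub_two_mul_mul_cos_add_sq_pos {x : ℝ} (hx : |x| ≠ 1) (θ : ℝ) :
    0 < 1 - 2 * x * cos θ + x ^ 2 := by
  have hsq : 1 - 2 * x * cos θ + x ^ 2 = (x - cos θ) ^ 2 + sin θ ^ 2 := by
    linear_combination -(sin_sq_add_cos_sq θ)
  rw [hsq]
  by_contra! h
  have hc : x = cos θ := by nlinarith [sq_nonneg (x - cos θ), sq_nonneg (sin θ)]
  have hs : sin θ = 0 := by nlinarith [sq_nonneg (x - cos θ), sq_nonneg (sin θ)]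
  rcases sin_eq_zero_iff_cos_eq.mp hs with h1 | h1 <;> simp [hc, h1] at hx

end Real

theorem rational_cos_sum_shifted (n : ℕ) (hn : 1 ≤ n) (x : ℝ) (hx : |x| ≠ 1) :
    ∑ l ∈ Finset.range n, 1 / (1 - 2 * x * Real.cos (π * (l + 1 / 2) / n) + x ^ 2) =
      n * (x ^ (2 * n) - 1) / ((x ^ 2 - 1) * (x ^ (2 * n) + 1)) := by
  set q : ℕ → ℝ := fun l => 1 - 2 * x * cos (π * (l + 1 / 2) / n) + x ^ 2
  change ∑ l ∈ range n, 1 / q l = _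
  have hx2 : x ^ 2 - 1 ≠ 0 := by
    rwa [sub_ne_zero, ← sq_abs, Ne, pow_eq_one_iff_of_nonneg (abs_nonneg x) two_ne_zero]
  have hX : 0 ≤ x ^ (2 * n) := (even_two_mul n).pow_nonneg x
  have hhalf (l : ℕ) :
      (1 - x * cos (π * (l + 1 / 2) / n)) / q l = 1 / 2 + (1 - x ^ 2) / 2 * (1 / q l) := by
    have hq : q l ≠ 0 := (one_sub_two_mul_mul_cos_add_sq_pos hx _).ne'
    rw [div_eq_iff hq, add_mul, mul_assoc ((1 - x ^ 2) / 2), one_div_mul_cancel hq]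
    ring
  have hsymm : ∑ l ∈ range (2 * n), 1 / q l = 2 • ∑ l ∈ range n, 1 / q l :=
    sum_range_two_mul_eq_two_nsmul_of_symm fun i j hij => by
      simp only [q, cos_pi_mul_add_half_div_eq_of_add_add_one_eq hij]
  have hre := sum_range_one_sub_mul_cos_div (by omega : n ≠ 0) x
  rw [sum_congr rfl fun l _ => hhalf l, sum_add_distrib, sum_const, card_range, ← mul_sum, hsymm,
    nsmul_eq_mul, nsmul_eq_mul, eq_div_iff (by positivity)] at hre
  rw [eq_div_iff (mul_ne_zero hx2 (by positivity))]
  push_cast at hre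
  linear_combination -hre
end

section
/- For every natural number n ≥ 2, ∑_{l=1}^{n-1} csc(πl/n) = −(1/n)·∑_{k=0}^{n-1} (2k+1)·cot(π(2k+1)/(2n)). -/
open Real Finset

/-!
Both sides equal the double sum `-(1/n) ∑ₖ ∑ₗ (2k+1) sin (π(2k+1)l/n)`, taken in the two orders.
Summing over `k` first, with `z = exp (iπl/n)`: `z²` is an `n`-th root of unity other than `1`, and
differentiating the vanishing geometric sum gives `∑ₖ (2k+1) z^(2k+1) = -i n / sin (πl/n)`.
Summing over `l` first, with `w = exp (iπ(2k+1)/n)`: `wⁿ = -1`, so `∑ₗ wˡ = 2 / (1 - w)`, and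
`2 / (1 - exp (2ix)) = 1 + i cot x`.
-/

namespace Complex

theorem exp_mul_I_pow (x : ℂ) (m : ℕ) : exp (x * I) ^ m = exp (m * x * I) := by
  rw [← exp_nat_mul, mul_assoc]

theorem exp_ofReal_mul_I_pow_im (x : ℝ) (m : ℕ) : (exp (x * I) ^ m).im = Real.sin (m * x) := by
  rw [exp_mul_I_pow, ← ofReal_natCast, ← ofReal_mul, exp_ofReal_mul_I_im]

theorem exp_mul_I_sq_sub_one (x : ℂ) : exp (x * I) ^ 2 - 1 = 2 * I * sin x * exp (x * I) := by
  rw [exp_mul_I]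
  linear_combination sin_sq_add_cos_sq x - sin x ^ 2 * I_sq

theorem exp_mul_I_sq_add_one (x : ℂ) : exp (x * I) ^ 2 + 1 = 2 * cos x * exp (x * I) := by
  rw [exp_mul_I]
  linear_combination -sin_sq_add_cos_sq x + sin x ^ 2 * I_sq

theorem exp_mul_I_sq_eq_one_iff {x : ℂ} : exp (x * I) ^ 2 = 1 ↔ sin x = 0 := by
  rw [← sub_eq_zero, exp_mul_I_sq_sub_one]
  simp [I_ne_zero, exp_ne_zero]

theorem two_div_one_sub_exp_mul_I_sq {x : ℂ} (hx : sin x ≠ 0) :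
    2 / (1 - exp (x * I) ^ 2) = 1 + cot x * I := by
  have hne : 1 - exp (x * I) ^ 2 ≠ 0 :=
    sub_ne_zero.mpr (Ne.symm (mt exp_mul_I_sq_eq_one_iff.mp hx))
  rw [div_eq_iff hne, ← neg_sub, exp_mul_I_sq_sub_one, cot_eq_cos_div_sin, exp_mul_I]
  field_simp
  linear_combination (I * sin x * cos x + sin x ^ 2 + cos x ^ 2) * I_sq - sin_sq_add_cos_sq x

end Complex

theorem mul_sum_range_natCast_mul_pow {R : Type*} [CommRing R] (w : R) (n : ℕ) :
    (w - 1) * ∑ k ∈ range n, (k : R) * w ^ k = n * w ^ n - w * ∑ k ∈ range n, w ^ k := by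
  induction n with
  | zero => simp
  | succ m ih =>
    rw [sum_range_succ, sum_range_succ, mul_add, ih]
    push_cast
    ring

theorem sum_range_natCast_mul_pow_of_pow_eq_one {K : Type*} [Field K] {w : K} {n : ℕ}
    (hw : w ≠ 1) (hwn : w ^ n = 1) :
    ∑ k ∈ range n, (k : K) * w ^ k = n / (w - 1) := by
  have key := mul_sum_range_natCast_mul_pow w n
  rw [geom_sum_eq hw, hwn, sub_self, zero_div, mul_zero, sub_zero, mul_one] at key
  rw [eq_div_iff (sub_ne_zero.mpr hw), mul_comm, key]

theorem sum_range_odd_mul_pow_odd {K : Type*} [Field K] {z : K} {n : ℕ}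
    (hz : z ^ 2 ≠ 1) (hzn : (z ^ 2) ^ n = 1) :
    ∑ k ∈ range n, (2 * k + 1 : K) * z ^ (2 * k + 1) = 2 * n * z / (z ^ 2 - 1) := by
  have hgeom : ∑ k ∈ range n, (z ^ 2) ^ k = 0 := by
    rw [geom_sum_eq hz, hzn, sub_self, zero_div]
  calc ∑ k ∈ range n, (2 * k + 1 : K) * z ^ (2 * k + 1)
      = 2 * z * ∑ k ∈ range n, (k : K) * (z ^ 2) ^ k + z * ∑ k ∈ range n, (z ^ 2) ^ k := by
        rw [mul_sum, mul_sum, ← sum_add_distrib]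
        refine sum_congr rfl fun k _ => ?_
        ring
    _ = 2 * n * z / (z ^ 2 - 1) := by
        rw [sum_range_natCast_mul_pow_of_pow_eq_one hz hzn, hgeom]
        ring

namespace Real

open Complex in
theorem sum_range_odd_mul_sin_odd_mul {φ : ℝ} {n : ℕ} (hφ : sin φ ≠ 0) (hnφ : sin (n * φ) = 0) :
    ∑ k ∈ range n, (2 * k + 1) * sin ((2 * k + 1) * φ) = -n / sin φ := by
  set z := cexp (φ * I) with hz_def
  have hz2 : z ^ 2 ≠ 1 := by
    rw [Ne, exp_mul_I_sq_eq_one_iff]; exact_mod_cast hφ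
  have hz2n : (z ^ 2) ^ n = 1 := by
    rw [← pow_mul, mul_comm 2 n, pow_mul, exp_mul_I_pow, exp_mul_I_sq_eq_one_iff]
    exact_mod_cast hnφ
  have hval : 2 * n * z / (z ^ 2 - 1) = (-n / sin φ : ℝ) * I := by
    have hsin : Complex.sin φ ≠ 0 := by exact_mod_cast hφ
    have hz0 : z ≠ 0 := Complex.exp_ne_zero _
    rw [exp_mul_I_sq_sub_one, ← hz_def]
    push_cast
    field_simp
    linear_combination (n : ℂ) * I_sq
  have hsum := congrArg im ((sum_range_odd_mul_pow_odd hz2 hz2n).trans hval)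
  rw [im_sum, mul_I_im, ofReal_re] at hsum
  rw [← hsum]
  refine sum_congr rfl fun k _ => ?_
  rw [show (2 * (k : ℂ) + 1) = ((2 * k + 1 : ℝ) : ℂ) by push_cast; ring, im_ofReal_mul,
    exp_ofReal_mul_I_pow_im]
  push_cast
  ring

open Complex in
theorem sum_range_sin_two_mul_mul_eq_cot {x : ℝ} {n : ℕ} (hnx : cos (n * x) = 0) :
    ∑ l ∈ range n, sin (2 * l * x) = cot x := by
  set w := cexp (x * I) ^ 2 with hw_def
  have hwn : w ^ n = -1 := by
    rw [← pow_mul, mul_comm 2 n, pow_mul, exp_mul_I_pow, eq_neg_iff_add_eq_zero,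
      exp_mul_I_sq_add_one, ← ofReal_natCast, ← ofReal_mul, ← ofReal_cos, hnx]
    simp
  have hw : w ≠ 1 := by
    rintro hw; rw [hw, one_pow] at hwn; norm_num at hwn
  have hsin : Complex.sin x ≠ 0 := mt exp_mul_I_sq_eq_one_iff.mpr hw
  have hsum : ∑ l ∈ range n, w ^ l = 1 + Complex.cot x * I := by
    rw [geom_sum_eq hw, hwn, ← two_div_one_sub_exp_mul_I_sq hsin, ← hw_def,
      div_eq_div_iff (sub_ne_zero.mpr hw) (sub_ne_zero.mpr hw.symm)]
    ring
  have hsum_im := congrArg im hsum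
  rw [im_sum, ← ofReal_cot, add_im, one_im, mul_I_im, ofReal_re, zero_add] at hsum_im
  rw [← hsum_im]
  refine sum_congr rfl fun l _ => ?_
  rw [← pow_mul, exp_ofReal_mul_I_pow_im]
  push_cast
  ring

theorem inv_sin_pi_mul_div_eq_sum_odd_mul_sin {l n : ℕ} (hl : 0 < l) (hln : l < n) :
    (sin (π * l / n))⁻¹ =
      -(1 / (n : ℝ)) * ∑ k ∈ range n, (2 * (k : ℝ) + 1) * sin (π * (2 * k + 1) * l / n) := by
  have hn : (0 : ℝ) < n := by exact_mod_cast hl.trans hln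
  have hsin : sin (π * l / n) ≠ 0 := by
    refine (sin_pos_of_pos_of_lt_pi (by positivity) ?_).ne'
    rw [div_lt_iff₀ hn]
    exact mul_lt_mul_of_pos_left (by exact_mod_cast hln) pi_pos
  have hsum := sum_range_odd_mul_sin_odd_mul hsin
    (by rw [mul_div_cancel₀ _ hn.ne', mul_comm]; exact sin_nat_mul_pi l)
  simp only [show ∀ k : ℕ, (2 * (k : ℝ) + 1) * (π * l / n) = π * (2 * k + 1) * l / n by
    intro k; ring] at hsum
  rw [hsum]
  field_simp

theorem sum_Ico_sin_pi_odd_mul_div_eq_cot {k n : ℕ} (hkn : k < n) :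
    ∑ l ∈ Ico 1 n, sin (π * (2 * k + 1) * l / n) = cot (π * (2 * k + 1) / (2 * n)) := by
  have hn : (n : ℝ) ≠ 0 := by exact_mod_cast (k.zero_le.trans_lt hkn).ne'
  have hcos : cos (n * (π * (2 * k + 1) / (2 * n))) = 0 :=
    cos_eq_zero_iff.mpr ⟨k, by push_cast; field_simp⟩
  rw [← sum_range_sin_two_mul_mul_eq_cot hcos, sum_range_eq_add_Ico _ (k.zero_le.trans_lt hkn)]
  simp only [CharP.cast_eq_zero, mul_zero, zero_mul, sin_zero, zero_add]
  refine sum_congr rfl fun l _ => ?_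
  congr 1
  field_simp

end Real

theorem csc_sum_eq_odd_cot_sum_general (n : ℕ) :
    ∑ l ∈ Finset.Ico 1 n, (Real.sin (π * l / n))⁻¹ =
      -(1 / (n : ℝ)) * ∑ k ∈ Finset.range n,
        (2 * (k : ℝ) + 1) * Real.cot (π * (2 * k + 1) / (2 * n)) := by
  calc ∑ l ∈ Ico 1 n, (sin (π * l / n))⁻¹
      = ∑ l ∈ Ico 1 n, -(1 / (n : ℝ)) *
          ∑ k ∈ range n, (2 * (k : ℝ) + 1) * sin (π * (2 * k + 1) * l / n) :=
        sum_congr rfl fun l hl =>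
          inv_sin_pi_mul_div_eq_sum_odd_mul_sin (mem_Ico.mp hl).1 (mem_Ico.mp hl).2
    _ = -(1 / (n : ℝ)) * ∑ k ∈ range n,
          (2 * (k : ℝ) + 1) * ∑ l ∈ Ico 1 n, sin (π * (2 * k + 1) * l / n) := by
        rw [← mul_sum, sum_comm]
        simp only [mul_sum]
    _ = _ := by
        congr 1
        exact sum_congr rfl fun k hk =>
          congrArg _ (sum_Ico_sin_pi_odd_mul_div_eq_cot (mem_range.mp hk))

theorem csc_sum_eq_odd_cot_sum (n : ℕ) (hn : 2 ≤ n) :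
    ∑ l ∈ Finset.Ico 1 n, (Real.sin (π * l / n))⁻¹ =
      -(1 / (n : ℝ)) * ∑ k ∈ Finset.range n,
        (2 * (k : ℝ) + 1) * Real.cot (π * (2 * k + 1) / (2 * n)) :=
  csc_sum_eq_odd_cot_sum_general n
end

section
/- For every natural number n ≥ 2, ∑_{l=1}^{n-1} csc(πl/n) = (2n/π)(γ + log(4n)) + (4/π)·∑_{l=0}^{n-1} ((2l+1)/(2n))·Ψ((2l+1)/(2n)), where Ψ is the digamma function and γ is the Euler–Mascheroni constant. -/
/-!
The points `xₗ = (2l+1)/(2n)` are symmetric about `1/2`, so pairing `ψ(xₗ)` with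
`ψ(1 - xₗ)` through the reflection formula `ψ(1 - x) = ψ(x) + π cot πx` turns
`∑ (2xₗ - 1) ψ(xₗ)` into `(π/2) ∑ (1 - 2xₗ) cot πxₗ`. Writing `∑_{k<2n} (n - k) cot (πk/2n)`
once as its even plus odd terms and once as the terms `k` plus `n + k`, the half-angle
identities for `cot 2t` and `csc 2t` turn this cotangent sum into the cosecant sum.
The unweighted sum `∑ ψ(xₗ) = -n(γ + log 4n)` is the logarithmic derivative at `x = 1/2` of
Gauss's multiplication formula, which Bohr–Mollerup gives up to a constant factor;
differentiation discards the constant.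
-/

open Real Finset

/-- The digamma function: the logarithmic derivative of the Gamma function. -/
noncomputable def digamma (x : ℝ) : ℝ := deriv (fun y => Real.log (Real.Gamma y)) x

open Filter Topology Set

theorem hasDerivAt_log_Gamma {x : ℝ} (hx : ∀ m : ℕ, x ≠ -m) :
    HasDerivAt (fun y => log (Gamma y)) (digamma x) x :=
  ((differentiableAt_Gamma hx).log (Gamma_ne_zero hx)).hasDerivAt

theorem hasDerivAt_log_Gamma_of_pos {x : ℝ} (hx : 0 < x) :
    HasDerivAt (fun y => log (Gamma y)) (digamma x) x :=
  hasDerivAt_log_Gamma fun m h => by linarith [m.cast_nonneg (α := ℝ)]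

theorem digamma_one_half : digamma (1 / 2) = -eulerMascheroniConstant - 2 * log 2 := by
  have h := (hasDerivAt_Gamma_one_half.log (Gamma_pos_of_pos one_half_pos).ne').deriv
  rw [Gamma_one_half_eq] at h
  rw [digamma, h, neg_mul, neg_div, mul_div_cancel_left₀ _ (sqrt_ne_zero'.2 pi_pos)]
  ring

theorem digamma_one_sub {x : ℝ} (hx : ∀ n : ℤ, x ≠ n) :
    digamma (1 - x) = digamma x + π * cot (π * x) := by
  have hsin : sin (π * x) ≠ 0 := sin_ne_zero_iff.2 fun n h =>
    hx n (mul_left_cancel₀ pi_ne_zero (by rw [← h, mul_comm]))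
  have hsin_nhds : ∀ᶠ s in 𝓝 x, sin (π * s) ≠ 0 :=
    (continuous_sin.comp (continuous_const.mul continuous_id)).continuousAt.eventually_ne hsin
  have hreflect : (fun s => log (Gamma s) + log (Gamma (1 - s))) =ᶠ[𝓝 x]
      fun s => log π - log (sin (π * s)) := by
    filter_upwards [hsin_nhds] with s hs
    have hprod : Gamma s * Gamma (1 - s) ≠ 0 := by
      rw [Gamma_mul_Gamma_one_sub]; exact div_ne_zero pi_ne_zero hs
    rw [← log_mul (left_ne_zero_of_mul hprod) (right_ne_zero_of_mul hprod),
      Gamma_mul_Gamma_one_sub, log_div pi_ne_zero hs]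
  have hL : HasDerivAt (fun s => log (Gamma s) + log (Gamma (1 - s)))
      (digamma x + digamma (1 - x) * (-1)) x :=
    (hasDerivAt_log_Gamma fun m h => hx (-m) (by simp [h])).add
      ((hasDerivAt_log_Gamma fun m h => hx (m + 1) (by push_cast; linarith)).comp x
        ((hasDerivAt_id x).const_sub 1))
  have hR : HasDerivAt (fun s => log π - log (sin (π * s))) (-(π * cot (π * x))) x := by
    have := (((hasDerivAt_id x).const_mul π).sin.log hsin).const_sub (log π)
    simp only [id, mul_one] at this
    rw [cot_eq_cos_div_sin, ← mul_div_assoc, mul_comm π]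
    exact this
  have hderiv := hL.unique (hR.congr_of_eventuallyEq hreflect)
  linarith

theorem two_mul_sum_mul_digamma_of_symm (a : ℕ → ℝ) (n : ℕ)
    (hsymm : ∀ l < n, a (n - 1 - l) = 1 - a l) (hnonint : ∀ l < n, ∀ m : ℤ, a l ≠ m) :
    2 * ∑ l ∈ range n, (2 * a l - 1) * digamma (a l) =
      π * ∑ l ∈ range n, (1 - 2 * a l) * cot (π * a l) := by
  have hreflect := sum_range_reflect (fun l => (2 * a l - 1) * digamma (a l)) n
  have hpair : ∀ l ∈ range n, (2 * a (n - 1 - l) - 1) * digamma (a (n - 1 - l)) =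
      -((2 * a l - 1) * digamma (a l)) + π * ((1 - 2 * a l) * cot (π * a l)) := by
    intro l hl
    rw [hsymm l (mem_range.1 hl), digamma_one_sub (hnonint l (mem_range.1 hl))]
    ring
  rw [sum_congr rfl hpair, sum_add_distrib, sum_neg_distrib, ← mul_sum] at hreflect
  linarith

namespace Real

/- Where `sin t` or `cos t` vanishes, both sides of the next three identities are `0`
by Mathlib's convention `x / 0 = 0`, so they need no hypotheses. -/

theorem cot_pi_div_two_add (t : ℝ) : cot (π / 2 + t) = -tan t := by
  rw [cot_eq_cos_div_sin, tan_eq_sin_div_cos, add_comm, cos_add_pi_div_two, sin_add_pi_div_two,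
    neg_div]

theorem cot_two_mul (t : ℝ) : cot (2 * t) = (cot t - tan t) / 2 := by
  rw [cot_eq_cos_div_sin, cot_eq_cos_div_sin, tan_eq_sin_div_cos, sin_two_mul, cos_two_mul]
  rcases eq_or_ne (sin t) 0 with hs | hs
  · simp [hs]
  rcases eq_or_ne (cos t) 0 with hc | hc
  · simp [hc]
  field_simp
  linear_combination sin_sq_add_cos_sq t

theorem inv_sin_two_mul (t : ℝ) : (sin (2 * t))⁻¹ = (cot t + tan t) / 2 := by
  rw [cot_eq_cos_div_sin, tan_eq_sin_div_cos, sin_two_mul]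
  rcases eq_or_ne (sin t) 0 with hs | hs
  · simp [hs]
  rcases eq_or_ne (cos t) 0 with hc | hc
  · simp [hc]
  field_simp
  linear_combination (-1 : ℝ) * sin_sq_add_cos_sq t

end Real

theorem Finset.sum_range_two_mul {M : Type*} [AddCommMonoid M] (f : ℕ → M) (n : ℕ) :
    ∑ k ∈ range (2 * n), f k =
      ∑ k ∈ range n, f (2 * k) + ∑ k ∈ range n, f (2 * k + 1) := by
  induction n with
  | zero => simp
  | succ n ih =>
    rw [show 2 * (n + 1) = 2 * n + 1 + 1 by ring, sum_range_succ, sum_range_succ, ih,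
      sum_range_succ, sum_range_succ]
    abel

theorem sum_range_sub_mul_cot_odd_eq (n : ℕ) :
    ∑ l ∈ range n, ((n : ℝ) - (2 * l + 1)) * cot (π * (2 * l + 1) / (2 * n)) =
      n * ∑ k ∈ Ico 1 n, (sin (π * k / n))⁻¹ := by
  rcases eq_or_ne n 0 with rfl | hn
  · simp
  set g : ℕ → ℝ := fun k => ((n : ℝ) - k) * cot (π * k / (2 * n)) with hg
  have hpoint : ∀ k : ℕ, g k + g (n + k) - g (2 * k) = n * (sin (π * k / n))⁻¹ := by
    intro k
    have h1 : π * ((n + k : ℕ) : ℝ) / (2 * n) = π / 2 + π * k / (2 * n) := by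
      push_cast; field_simp
    have h2 : π * ((2 * k : ℕ) : ℝ) / (2 * n) = 2 * (π * k / (2 * n)) := by
      push_cast; field_simp
    have h3 : π * k / n = 2 * (π * k / (2 * n)) := by field_simp
    simp only [hg, h1, h2, h3, cot_pi_div_two_add, cot_two_mul, inv_sin_two_mul]
    push_cast
    ring
  calc ∑ l ∈ range n, ((n : ℝ) - (2 * l + 1)) * cot (π * (2 * l + 1) / (2 * n))
      = ∑ l ∈ range n, g (2 * l + 1) := by simp [hg]
    _ = ∑ k ∈ range n, (g k + g (n + k) - g (2 * k)) := by
      rw [sum_sub_distrib, sum_add_distrib, ← sum_range_add, ← two_mul, sum_range_two_mul]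
      abel
    _ = n * ∑ k ∈ range n, (sin (π * k / n))⁻¹ := by
      rw [mul_sum]
      exact sum_congr rfl fun k _ => hpoint k
    _ = n * ∑ k ∈ Ico 1 n, (sin (π * k / n))⁻¹ := by
      rw [range_eq_Ico, sum_eq_sum_Ico_succ_bot (Nat.pos_of_ne_zero hn)]
      simp

section Multiplication

variable {m : ℕ}

noncomputable def multiplicationGamma (m : ℕ) (x : ℝ) : ℝ :=
  (m : ℝ) ^ x * ∏ k ∈ range m, Gamma ((x + k) / m)

theorem multiplicationGamma_pos (hm : 0 < m) {x : ℝ} (hx : 0 < x) :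
    0 < multiplicationGamma m x := by
  have : (0 : ℝ) < m := by exact_mod_cast hm
  exact mul_pos (rpow_pos_of_pos this _) (prod_pos fun k _ => Gamma_pos_of_pos (by positivity))

theorem multiplicationGamma_add_one (hm : 0 < m) {x : ℝ} (hx : 0 < x) :
    multiplicationGamma m (x + 1) = x * multiplicationGamma m x := by
  have hm' : (m : ℝ) ≠ 0 := by positivity
  have hshift := prod_range_succ' (fun k => Gamma ((x + k) / m)) m
  rw [prod_range_succ] at hshift
  simp only [Nat.cast_add, Nat.cast_one, Nat.cast_zero, add_zero] at hshift
  rw [show (x + m) / m = x / m + 1 by field_simp, Gamma_add_one (by positivity)] at hshift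
  have hΓ : Gamma (x / m) ≠ 0 := (Gamma_pos_of_pos (by positivity)).ne'
  unfold multiplicationGamma
  have hprod : ∏ k ∈ range m, Gamma ((x + 1 + k) / m) =
      (∏ k ∈ range m, Gamma ((x + k) / m)) * (x / m) :=
    mul_right_cancel₀ hΓ (by
      rw [prod_congr rfl fun k _ => by rw [add_right_comm, add_assoc], ← hshift]
      ring)
  rw [rpow_add_one hm', hprod]
  field_simp

theorem log_multiplicationGamma (hm : 0 < m) {x : ℝ} (hx : 0 < x) :
    log (multiplicationGamma m x) = x * log m + ∑ k ∈ range m, log (Gamma ((x + k) / m)) := by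
  have : (0 : ℝ) < m := by exact_mod_cast hm
  rw [multiplicationGamma, log_mul (rpow_pos_of_pos this _).ne'
    (prod_pos fun k _ => Gamma_pos_of_pos (by positivity)).ne', log_rpow this,
    log_prod fun k _ => (Gamma_pos_of_pos (by positivity)).ne']

theorem convexOn_log_multiplicationGamma (hm : 0 < m) :
    ConvexOn ℝ (Ioi 0) (log ∘ multiplicationGamma m) := by
  refine ConvexOn.congr ⟨convex_Ioi 0, fun x (hx : 0 < x) y (hy : 0 < y) a b ha hb hab => ?_⟩
    fun x hx => (log_multiplicationGamma hm hx).symm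
  have : (0 : ℝ) < m := by exact_mod_cast hm
  simp only [smul_eq_mul]
  have hterm : ∀ k ∈ range m, log (Gamma ((a * x + b * y + k) / m)) ≤
      a * log (Gamma ((x + k) / m)) + b * log (Gamma ((y + k) / m)) := by
    intro k _
    have := convexOn_log_Gamma.2 (x := (x + k) / m) (y := (y + k) / m)
      (mem_Ioi.2 (by positivity)) (mem_Ioi.2 (by positivity)) ha hb hab
    simp only [Function.comp_apply, smul_eq_mul] at this
    rwa [show (a * x + b * y + k) / m = a * ((x + k) / m) + b * ((y + k) / m) by
      field_simp; linear_combination -(k : ℝ) * hab]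
  have := sum_le_sum hterm
  rw [sum_add_distrib, ← mul_sum, ← mul_sum] at this
  linear_combination this

theorem multiplicationGamma_eq_mul_Gamma (hm : 0 < m) {x : ℝ} (hx : 0 < x) :
    multiplicationGamma m x = multiplicationGamma m 1 * Gamma x := by
  have hC := multiplicationGamma_pos hm one_pos
  have hconv :
      ConvexOn ℝ (Ioi 0) (log ∘ fun y => multiplicationGamma m y / multiplicationGamma m 1) :=
    ((convexOn_log_multiplicationGamma hm).add_const (-log (multiplicationGamma m 1))).congr
      fun y hy => by simp [log_div (multiplicationGamma_pos hm hy).ne' hC.ne', sub_eq_add_neg]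
  have hΓ := eq_Gamma_of_log_convex hconv
    (fun hy => by rw [multiplicationGamma_add_one hm hy, mul_div_assoc])
    (fun hy => div_pos (multiplicationGamma_pos hm hy) hC) (div_self hC.ne') hx
  rw [← hΓ, mul_div_cancel₀ _ hC.ne']

theorem sum_digamma_add_div (hm : 0 < m) {x : ℝ} (hx : 0 < x) :
    ∑ k ∈ range m, digamma ((x + k) / m) = m * (digamma x - log m) := by
  have hm' : (0 : ℝ) < m := by exact_mod_cast hm
  have hlog : (fun y => y * log m + ∑ k ∈ range m, log (Gamma ((y + k) / m))) =ᶠ[𝓝 x]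
      fun y => log (multiplicationGamma m 1) + log (Gamma y) := by
    filter_upwards [Ioi_mem_nhds hx] with y hy
    rw [← log_multiplicationGamma hm hy, multiplicationGamma_eq_mul_Gamma hm hy,
      log_mul (multiplicationGamma_pos hm one_pos).ne' (Gamma_pos_of_pos hy).ne']
  have hL : HasDerivAt (fun y => y * log m + ∑ k ∈ range m, log (Gamma ((y + k) / m)))
      (1 * log m + ∑ k ∈ range m, digamma ((x + k) / m) * (1 / m)) x :=
    ((hasDerivAt_id x).mul_const _).add (HasDerivAt.fun_sum fun k _ =>
      (hasDerivAt_log_Gamma_of_pos (by positivity)).comp x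
        (((hasDerivAt_id x).add_const _).div_const _))
  have hderiv := hL.unique
    ((hasDerivAt_log_Gamma_of_pos hx).const_add _ |>.congr_of_eventuallyEq hlog)
  rw [← sum_mul] at hderiv
  field_simp at hderiv
  linarith

end Multiplication

noncomputable def oddFrac (n l : ℕ) : ℝ := (2 * l + 1) / (2 * n)

theorem oddFrac_mem_Ioo {n l : ℕ} (hl : l < n) : oddFrac n l ∈ Set.Ioo 0 1 := by
  have hl' : (l : ℝ) + 1 ≤ n := by exact_mod_cast hl
  have hn : (0 : ℝ) < n := by linarith [(l.cast_nonneg : (0 : ℝ) ≤ l)]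
  rw [oddFrac, Set.mem_Ioo, div_lt_one (by positivity)]
  exact ⟨by positivity, by linarith⟩

theorem oddFrac_reflect {n l : ℕ} (hl : l < n) : oddFrac n (n - 1 - l) = 1 - oddFrac n l := by
  have : (n : ℝ) ≠ 0 := Nat.cast_ne_zero.2 (by omega)
  rw [oddFrac, oddFrac, Nat.cast_sub (by omega), Nat.cast_sub (by omega)]
  field_simp
  ring

theorem oddFrac_ne_intCast {n l : ℕ} (hl : l < n) (m : ℤ) : oddFrac n l ≠ m := by
  intro hm
  obtain ⟨h0, h1⟩ := oddFrac_mem_Ioo hl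
  rw [hm] at h0 h1
  norm_cast at h0 h1
  omega

theorem sum_digamma_oddFrac {n : ℕ} (hn : 0 < n) :
    ∑ l ∈ range n, digamma (oddFrac n l) = -n * (eulerMascheroniConstant + log (4 * n)) := by
  have hn' : (0 : ℝ) < n := by exact_mod_cast hn
  have h := sum_digamma_add_div hn (x := 1 / 2) (by norm_num)
  rw [digamma_one_half] at h
  have hpoint : ∀ l : ℕ, oddFrac n l = (1 / 2 + l) / n := fun l => by
    rw [oddFrac]; field_simp; ring
  rw [sum_congr rfl fun l _ => by rw [hpoint l], h, show (4 : ℝ) * n = 2 ^ 2 * n by norm_num,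
    log_mul (by positivity) hn'.ne', log_pow]
  push_cast
  ring

theorem two_mul_sum_mul_digamma_oddFrac (n : ℕ) :
    2 * ∑ l ∈ range n, (2 * oddFrac n l - 1) * digamma (oddFrac n l) =
      π * ∑ k ∈ Ico 1 n, (sin (π * k / n))⁻¹ := by
  rcases eq_or_ne n 0 with rfl | hn
  · simp
  rw [two_mul_sum_mul_digamma_of_symm _ n (fun l => oddFrac_reflect) fun l => oddFrac_ne_intCast]
  congr 1
  apply mul_left_cancel₀ (Nat.cast_ne_zero.2 hn : (n : ℝ) ≠ 0)
  rw [← sum_range_sub_mul_cot_odd_eq, mul_sum]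
  refine sum_congr rfl fun l _ => ?_
  unfold oddFrac
  field_simp

theorem csc_sum_digamma_general (n : ℕ) :
    ∑ l ∈ Finset.Ico 1 n, (Real.sin (π * l / n))⁻¹ =
      (2 * n / π) * (Real.eulerMascheroniConstant + Real.log (4 * n)) +
        (4 / π) * ∑ l ∈ Finset.range n,
          ((2 * (l : ℝ) + 1) / (2 * n)) * digamma ((2 * l + 1) / (2 * n)) := by
  rcases Nat.eq_zero_or_pos n with rfl | hn
  · simp
  have hsplit : ∑ l ∈ range n, (2 * oddFrac n l - 1) * digamma (oddFrac n l) =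
      2 * ∑ l ∈ range n, oddFrac n l * digamma (oddFrac n l) -
        ∑ l ∈ range n, digamma (oddFrac n l) := by
    rw [mul_sum, ← sum_sub_distrib]
    exact sum_congr rfl fun l _ => by ring
  have hweighted := two_mul_sum_mul_digamma_oddFrac n
  rw [hsplit, sum_digamma_oddFrac hn] at hweighted
  change _ = _ + 4 / π * ∑ l ∈ range n, oddFrac n l * digamma (oddFrac n l)
  apply mul_left_cancel₀ pi_ne_zero
  rw [← hweighted]
  field_simp
  ring

theorem csc_sum_digamma (n : ℕ) (hn : 2 ≤ n) :
    ∑ l ∈ Finset.Ico 1 n, (Real.sin (π * l / n))⁻¹ =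
      (2 * n / π) * (Real.eulerMascheroniConstant + Real.log (4 * n)) +
        (4 / π) * ∑ l ∈ Finset.range n,
          ((2 * (l : ℝ) + 1) / (2 * n)) * digamma ((2 * l + 1) / (2 * n)) :=
  csc_sum_digamma_general n
end
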